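/- arXiv:0704.2282 — 2 statements merged into one kernel-verified Lean document; each statement's English description precedes it below -/
import Mathlib

section
/- Let W and W' be Kekulé states of a graph G. Then the subgraph C = W ⊕ W' is a curve in G and (C, W) is an alternating curve in G. -/
open scoped symmDiff

namespace Kekule

abbrev Node := ℕ
abbrev Graph := Finset (Finset Node)

/-- `G` is a graph: every edge is a 2-element set of nodes. -/
def IsGraph (G : Graph) : Prop := ∀ e ∈ G, e.card = 2

/-- The nodes of a graph: the elements of its edges. -/
def nodes (G : Graph) : Finset Node := G.biUnion id

/-- The number of edges of `G` containing `v`. -/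
def deg (G : Graph) (v : Node) : ℕ := (G.filter (fun e => v ∈ e)).card

/-- A port is a node contained in exactly one edge. -/
def ports (G : Graph) : Finset Node := (nodes G).filter (fun v => deg G v = 1)

/-- An internal node is a node that is not a port. -/
def internal (G : Graph) : Finset Node := (nodes G).filter (fun v => deg G v ≠ 1)

/-- A Kekulé state of `G`: a subgraph `W ⊆ G` such that every internal node
of `G` lies in exactly one edge of `W`. -/
def IsKekule (G W : Graph) : Prop := W ⊆ G ∧ ∀ v ∈ internal G, deg W v = 1

/-- A curve in `G`: a subgraph `C ⊆ G` such that every node of `C` that is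
internal in `G` lies in exactly two edges of `C`. -/
def IsCurve (G C : Graph) : Prop :=
  C ⊆ G ∧ ∀ v ∈ nodes C, v ∈ internal G → deg C v = 2

/-- `(C, W)` is an alternating curve in `G`: both are subgraphs of `G`,
`C` is a curve in `G`, and `W ∩ C` is a Kekulé state of `C`. -/
def IsAlternating (G C W : Graph) : Prop :=
  W ⊆ G ∧ IsCurve G C ∧ IsKekule C (W ∩ C)

/-- `W|P`: the set of ports in `P` that lie in some edge of `W`. -/
def rest (W : Graph) (P : Finset Node) : Finset Node := P ∩ nodes W

/-- The set of Kekulé port assignments of `G`. -/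
def KP (G : Graph) : Set (Finset Node) :=
  {g | ∃ W, IsKekule G W ∧ rest W (ports G) = g}

/-- A cell `K` over `P` is a Kekulé cell if it is the set of Kekulé port
assignments of some graph with port set `P`. -/
def IsKekuleCell (P : Finset Node) (K : Set (Finset Node)) : Prop :=
  ∃ G, IsGraph G ∧ ports G = P ∧ KP G = K

/-- A channel: a 2-element subset of `P`. -/
def IsChannel (P : Finset Node) (c : Finset Node) : Prop := c ⊆ P ∧ c.card = 2

/-- A port `p` is flexible for a cell `K`. -/
def Flexible (K : Set (Finset Node)) (p : Node) : Prop :=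
  ∃ g ∈ K, ∃ g' ∈ K, p ∈ g ∧ p ∉ g'

/-- Hamming distance between two port assignments. -/
def hdist (k k' : Finset Node) : ℕ := (k ∆ k').card

/-- The Hamming diameter of `K` equals `n`. -/
def HamDiamEq (K : Set (Finset Node)) (n : ℕ) : Prop :=
  (∃ k ∈ K, ∃ k' ∈ K, hdist k k' = n) ∧ ∀ k ∈ K, ∀ k' ∈ K, hdist k k' ≤ n

/-- `G` is connected: nonempty, and any two distinct nodes are joined by a walk. -/
def Connected (G : Graph) : Prop :=
  G.Nonempty ∧ ∀ p ∈ nodes G, ∀ q ∈ nodes G, p ≠ q →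
    ∃ (n : ℕ) (f : ℕ → Node), f 0 = p ∧ f n = q ∧
      ∀ i < n, ({f i, f (i + 1)} : Finset Node) ∈ G

/-- `C` is a simple path between `p` and `q`. -/
def IsSimplePath (C : Graph) (p q : Node) : Prop :=
  Connected C ∧ ports C = {p, q} ∧
    ∀ v ∈ nodes C, v ≠ p → v ≠ q → deg C v = 2

/-- A cycle: a connected graph all of whose nodes lie in exactly two edges. -/
def IsCycle (C : Graph) : Prop :=
  Connected C ∧ ∀ v ∈ nodes C, deg C v = 2

/-- A semi-Kekulé state of `G`: every internal node of `G` lies in an odd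
number of edges of `W`. -/
def IsSemiKekule (G W : Graph) : Prop :=
  W ⊆ G ∧ ∀ v ∈ internal G, deg W v % 2 = 1

/-- The signature of `G`. -/
def sig (G : Graph) : ℕ := (internal G).card % 2

/-- `G` is omniconjugated. -/
def Omniconjugated (G : Graph) : Prop :=
  2 ≤ (ports G).card ∧ KP G = {g | g ⊆ ports G ∧ g.card % 2 = sig G}

instance : Std.Commutative (α := Finset Node) (· ∆ ·) := ⟨symmDiff_comm⟩
instance : Std.Associative (α := Finset Node) (· ∆ ·) := ⟨symmDiff_assoc⟩

/-- The `⊕`-sum of a finite family of port assignments. -/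
def xorSum (D : Finset (Finset Node)) : Finset Node := D.fold (· ∆ ·) ∅ id

/- At an internal node `v` of `G`, `W` and `W'` each contain exactly one edge,
`a` and `b`. If `v` lies on `W ⊕ W'` then `a ≠ b`, so `v` meets exactly the two edges `a`, `b`
of `W ⊕ W'`, and exactly one of them, `a`, is in `W`. A node of `W ⊕ W'` that is internal there
is internal in `G`, since a subgraph cannot raise degrees. -/

lemma mem_nodes {X : Graph} {v : Node} : v ∈ nodes X ↔ ∃ e ∈ X, v ∈ e := by
  simp [nodes]

lemma deg_pos_iff_mem_nodes {X : Graph} {v : Node} : 0 < deg X v ↔ v ∈ nodes X := by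
  simp [mem_nodes, deg, Finset.card_pos, Finset.filter_nonempty_iff]

lemma deg_mono {X Y : Graph} (h : X ⊆ Y) (v : Node) : deg X v ≤ deg Y v :=
  Finset.card_le_card (Finset.filter_subset_filter _ h)

lemma internal_subset_internal {X Y : Graph} (h : X ⊆ Y) : internal X ⊆ internal Y := by
  intro v hv
  obtain ⟨hvX, hdegX⟩ := Finset.mem_filter.mp hv
  have hpos := deg_pos_iff_mem_nodes.mpr hvX
  have hle := deg_mono h v
  exact Finset.mem_filter.mpr
    ⟨Finset.biUnion_subset_biUnion_of_subset_left _ h hvX, by omega⟩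

lemma filter_symmDiff (X Y : Graph) (p : Finset Node → Prop) [DecidablePred p] :
    (X ∆ Y).filter p = X.filter p ∆ Y.filter p := by
  ext e
  simp only [Finset.mem_symmDiff, Finset.mem_filter]
  tauto

section TwoKekuleEdges

variable {X Y : Graph} {v : Node}

lemma exists_ne_of_deg_eq_one_of_mem_nodes_symmDiff (hX : deg X v = 1) (hY : deg Y v = 1)
    (hv : v ∈ nodes (X ∆ Y)) :
    ∃ a b, a ≠ b ∧ X.filter (v ∈ ·) = {a} ∧ Y.filter (v ∈ ·) = {b} := by
  obtain ⟨a, ha⟩ := Finset.card_eq_one.mp hX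
  obtain ⟨b, hb⟩ := Finset.card_eq_one.mp hY
  refine ⟨a, b, ?_, ha, hb⟩
  rintro rfl
  have hpos := deg_pos_iff_mem_nodes.mpr hv
  rw [deg, filter_symmDiff, ha, hb, symmDiff_self] at hpos
  exact absurd hpos (lt_irrefl 0)

lemma deg_symmDiff_eq_two (hX : deg X v = 1) (hY : deg Y v = 1) (hv : v ∈ nodes (X ∆ Y)) :
    deg (X ∆ Y) v = 2 := by
  obtain ⟨a, b, hab, ha, hb⟩ := exists_ne_of_deg_eq_one_of_mem_nodes_symmDiff hX hY hv
  have hstar : ({a} : Graph) ∆ {b} = {a, b} := by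
    ext e
    simp only [Finset.mem_symmDiff, Finset.mem_singleton, Finset.mem_insert]
    grind
  rw [deg, filter_symmDiff, ha, hb, hstar, Finset.card_pair hab]

lemma deg_inter_symmDiff_eq_one (hX : deg X v = 1) (hY : deg Y v = 1)
    (hv : v ∈ nodes (X ∆ Y)) : deg (X ∩ (X ∆ Y)) v = 1 := by
  obtain ⟨a, b, hab, ha, hb⟩ := exists_ne_of_deg_eq_one_of_mem_nodes_symmDiff hX hY hv
  have hstar : (X ∩ (X ∆ Y)).filter (v ∈ ·) = X.filter (v ∈ ·) \ Y.filter (v ∈ ·) := by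
    ext e
    simp only [Finset.mem_filter, Finset.mem_inter, Finset.mem_symmDiff, Finset.mem_sdiff]
    tauto
  rw [deg, hstar, ha, hb, Finset.sdiff_eq_self_of_disjoint (by simpa using hab),
    Finset.card_singleton]

end TwoKekuleEdges

theorem statement0_general (G W W' : Graph)
    (hW : IsKekule G W) (hW' : IsKekule G W') :
    IsCurve G (W ∆ W') ∧ IsAlternating G (W ∆ W') W := by
  have hsub : W ∆ W' ⊆ G :=
    (symmDiff_le_sup (a := W) (b := W')).trans (Finset.union_subset hW.1 hW'.1)
  have hcurve : IsCurve G (W ∆ W') :=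
    ⟨hsub, fun v hv hint => deg_symmDiff_eq_two (hW.2 v hint) (hW'.2 v hint) hv⟩
  refine ⟨hcurve, hW.1, hcurve, Finset.inter_subset_right, fun v hv => ?_⟩
  have hint : v ∈ internal G := internal_subset_internal hsub hv
  exact deg_inter_symmDiff_eq_one (hW.2 v hint) (hW'.2 v hint) (Finset.mem_filter.mp hv).1

/-- If `W` and `W'` are Kekulé states of `G`, then `C = W ⊕ W'`
is a curve in `G` and `(C, W)` is an alternating curve in `G`. -/
theorem statement0 (G W W' : Graph) (hG : IsGraph G)
    (hW : IsKekule G W) (hW' : IsKekule G W') :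
    IsCurve G (W ∆ W') ∧ IsAlternating G (W ∆ W') W :=
  statement0_general G W W' hW hW'
end Kekule
end

section
/- Let W be a Kekulé state of a graph G and let (C, W) be an alternating curve in G. Then W' = W ⊕ C is a Kekulé state of G. -/
open scoped symmDiff

namespace Kekule

theorem card_symmDiff_add_two_mul_card_inter {α : Type*} [DecidableEq α] (s t : Finset α) :
    (s ∆ t).card + 2 * (s ∩ t).card = s.card + t.card := by
  have hdisj : Disjoint (s ∆ t) (s ∩ t) := disjoint_symmDiff_inf s t
  have hunion : s ∆ t ∪ s ∩ t = s ∪ t := symmDiff_sup_inf s t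
  rw [two_mul, ← add_assoc, ← Finset.card_union_of_disjoint hdisj, hunion,
    Finset.card_union_add_card_inter]

theorem filter_symmDiff_s1 {α : Type*} [DecidableEq α] (p : α → Prop) [DecidablePred p]
    (s t : Finset α) : (s ∆ t).filter p = s.filter p ∆ t.filter p := by
  ext a
  simp only [Finset.mem_filter, Finset.mem_symmDiff]
  tauto

theorem deg_symmDiff_add_two_mul_deg_inter (W C : Graph) (v : Node) :
    deg (W ∆ C) v + 2 * deg (W ∩ C) v = deg W v + deg C v := by
  simp only [deg, filter_symmDiff_s1, Finset.filter_inter_distrib,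
    card_symmDiff_add_two_mul_card_inter]

theorem deg_eq_zero_of_notMem_nodes {C : Graph} {v : Node} (hv : v ∉ nodes C) : deg C v = 0 := by
  rw [deg, Finset.card_eq_zero, Finset.filter_eq_empty_iff]
  exact fun e he hve => hv (Finset.mem_biUnion.mpr ⟨e, he, hve⟩)

theorem deg_inter_le_right (W C : Graph) (v : Node) : deg (W ∩ C) v ≤ deg C v :=
  Finset.card_le_card (Finset.filter_subset_filter _ Finset.inter_subset_right)

theorem mem_internal_of_deg_eq_two {C : Graph} {v : Node} (hv : v ∈ nodes C)
    (h : deg C v = 2) : v ∈ internal C :=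
  Finset.mem_filter.mpr ⟨hv, by omega⟩

/-- At a node of `C` the degree drops by one edge of `W` and gains the other edge of `C`;
off `C` nothing changes. -/
theorem deg_symmDiff_eq_one {G W C : Graph} (hW : IsKekule G W) (hC : IsAlternating G C W)
    {v : Node} (hv : v ∈ internal G) : deg (W ∆ C) v = 1 := by
  obtain ⟨-, ⟨-, hCcurve⟩, -, hWCkekule⟩ := hC
  have hdeg := deg_symmDiff_add_two_mul_deg_inter W C v
  have hWv : deg W v = 1 := hW.2 v hv
  by_cases hvC : v ∈ nodes C
  · have hCv : deg C v = 2 := hCcurve v hvC hv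
    have hWCv : deg (W ∩ C) v = 1 := hWCkekule v (mem_internal_of_deg_eq_two hvC hCv)
    omega
  · have hCv : deg C v = 0 := deg_eq_zero_of_notMem_nodes hvC
    have hWCv : deg (W ∩ C) v ≤ deg C v := deg_inter_le_right W C v
    omega

theorem statement1_general (G W C : Graph)
    (hW : IsKekule G W) (hC : IsAlternating G C W) :
    IsKekule G (W ∆ C) :=
  ⟨Finset.symmDiff_subset_union.trans (Finset.union_subset hW.1 hC.2.1.1),
    fun _ hv => deg_symmDiff_eq_one hW hC hv⟩

/-- If `W` is a Kekulé state of `G` and `(C, W)` is an alternating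
curve in `G`, then `W' = W ⊕ C` is a Kekulé state of `G`. -/
theorem statement1 (G W C : Graph) (hG : IsGraph G)
    (hW : IsKekule G W) (hC : IsAlternating G C W) :
    IsKekule G (W ∆ C) :=
  statement1_general G W C hW hC

end Kekule
end
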